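/- arXiv:quant-ph/0611096 — 2 statements merged into one kernel-verified Lean document; each statement's English description precedes it below -/
import Mathlib

section
/- (Lemma 1.) Let H and H₂ be finite-dimensional complex inner product spaces, let φ_1,…,φ_n ∈ H and ψ_1,…,ψ_n ∈ H₂ be unit vectors, and let η_1,…,η_n ∈ [0,1]. The following are equivalent: (i) there exists an n×n complex positive semidefinite matrix A with A_{ii} = 1 for all i such that the matrix with entries ⟨φ_i, φ_j⟩ − √(η_i η_j) ⟨ψ_i, ψ_j⟩ A_{ij} is positive semidefinite; (ii) there exist finite-dimensional complex inner product spaces K and K', unit vectors χ_1,…,χ_n ∈ K and unit vectors α_1,…,α_n ∈ K' satisfying ⟨χ_i, χ_j⟩ = ⟨ψ_i, ψ_j⟩ · ⟨α_i, α_j⟩ for all i, j, together with an isometric realization of the transformation φ_i ↦ χ_i with success probabilities η_i. -/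
/-!
The key computation: if `U φᵢ = √ηᵢ • J χᵢ + βᵢ` with every `βᵢ` orthogonal to the range of `J`,
then `⟪φᵢ, φⱼ⟫ = √ηᵢ √ηⱼ ⟪χᵢ, χⱼ⟫ + ⟪βᵢ, βⱼ⟫`. Given a realization, `A` is therefore the Gram
matrix of the ancillas and the difference matrix is the Gram matrix of the `βᵢ`.

Conversely, every positive semidefinite matrix is a Gram matrix: take Gram vectors `αᵢ` of `A`,
`bᵢ` of the difference matrix and `χᵢ` of `Y ⊙ A` (positive semidefinite by the Schur product
theorem). The families `φᵢ` and `(√ηᵢ • χᵢ, bᵢ)` then have the same Gram matrix, so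
`φᵢ ↦ (√ηᵢ • χᵢ, bᵢ)` is an isometry on the span of the `φᵢ`; it extends to all of `H` by sending
the orthogonal complement of that span isometrically into one more orthogonal summand.
-/

open scoped ComplexOrder InnerProductSpace

open Matrix

theorem Matrix.PosSemidef.exists_gram_eq {𝕜 ι : Type*} [RCLike 𝕜] [Fintype ι]
    {A : Matrix ι ι 𝕜} (hA : A.PosSemidef) : ∃ v : ι → EuclideanSpace 𝕜 ι, gram 𝕜 v = A := by
  classical
  obtain ⟨B, rfl⟩ : ∃ B : Matrix ι ι 𝕜, A = star B * B := by
    open scoped MatrixOrder in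
    exact CStarAlgebra.nonneg_iff_eq_star_mul_self.mp hA.nonneg
  refine ⟨fun i => WithLp.toLp 2 (fun k => B k i), ?_⟩
  rw [gram_eq_conjTranspose_mul (EuclideanSpace.basisFun ι 𝕜)]
  rfl

theorem norm_eq_one_of_inner_self_eq_one {𝕜 E : Type*} [RCLike 𝕜] [NormedAddCommGroup E]
    [InnerProductSpace 𝕜 E] {x : E} (h : ⟪x, x⟫_𝕜 = 1) : ‖x‖ = 1 := by
  rw [inner_self_eq_norm_sq_to_K] at h
  norm_cast at h
  exact (pow_eq_one_iff_of_nonneg (norm_nonneg x) two_ne_zero).mp h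

section GramIsometry

variable {𝕜 ι E F : Type*} [RCLike 𝕜] [Fintype ι]
  [NormedAddCommGroup E] [InnerProductSpace 𝕜 E] [NormedAddCommGroup F] [InnerProductSpace 𝕜 F]
  {v : ι → E} {w : ι → F}

theorem inner_linearCombination_eq_of_gram_eq (h : gram 𝕜 w = gram 𝕜 v) (c d : ι → 𝕜) :
    ⟪Fintype.linearCombination 𝕜 w c, Fintype.linearCombination 𝕜 w d⟫_𝕜 =
      ⟪Fintype.linearCombination 𝕜 v c, Fintype.linearCombination 𝕜 v d⟫_𝕜 := by
  have h' : ∀ i j, ⟪w i, w j⟫_𝕜 = ⟪v i, v j⟫_𝕜 := fun i j => by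
    simpa using congrFun (congrFun h i) j
  simp only [Fintype.linearCombination_apply, inner_sum, sum_inner, inner_smul_left,
    inner_smul_right, h']

theorem ker_linearCombination_le_of_gram_eq (h : gram 𝕜 w = gram 𝕜 v) :
    LinearMap.ker (Fintype.linearCombination 𝕜 v) ≤
      LinearMap.ker (Fintype.linearCombination 𝕜 w) := by
  intro c hc
  rw [LinearMap.mem_ker] at hc ⊢
  rw [← inner_self_eq_zero (𝕜 := 𝕜), inner_linearCombination_eq_of_gram_eq h, hc, inner_zero_left]

noncomputable def LinearIsometry.ofGramEq (h : gram 𝕜 w = gram 𝕜 v) :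
    LinearMap.range (Fintype.linearCombination 𝕜 v) →ₗᵢ[𝕜] F :=
  LinearMap.isometryOfInner
    ((LinearMap.ker _).liftQ _ (ker_linearCombination_le_of_gram_eq h) ∘ₗ
      (Fintype.linearCombination 𝕜 v).quotKerEquivRange.symm.toLinearMap) <| by
    rintro ⟨_, hx⟩ ⟨_, hy⟩
    obtain ⟨c, rfl⟩ := LinearMap.mem_range.mp hx
    obtain ⟨d, rfl⟩ := LinearMap.mem_range.mp hy
    simp only [LinearMap.coe_comp, LinearEquiv.coe_coe, Function.comp_apply]
    rw [LinearMap.quotKerEquivRange_symm_apply_image, LinearMap.quotKerEquivRange_symm_apply_image]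
    exact inner_linearCombination_eq_of_gram_eq h c d

theorem LinearIsometry.ofGramEq_apply (h : gram 𝕜 w = gram 𝕜 v) (c : ι → 𝕜) :
    LinearIsometry.ofGramEq h ⟨Fintype.linearCombination 𝕜 v c, LinearMap.mem_range_self _ c⟩ =
      Fintype.linearCombination 𝕜 w c := by
  simp only [LinearIsometry.ofGramEq, LinearMap.coe_isometryOfInner, LinearMap.coe_comp,
    LinearEquiv.coe_coe, Function.comp_apply]
  rw [LinearMap.quotKerEquivRange_symm_apply_image]
  rfl

theorem exists_linearIsometry_apply_eq_of_gram_eq {G : Type*} [NormedAddCommGroup G]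
    [InnerProductSpace 𝕜 G] (h : gram 𝕜 w = gram 𝕜 v) (R : E →ₗᵢ[𝕜] G) :
    ∃ U : E →ₗᵢ[𝕜] WithLp 2 (F × G), ∀ i, U (v i) = WithLp.toLp 2 (w i, 0) := by
  classical
  set K := LinearMap.range (Fintype.linearCombination 𝕜 v)
  refine ⟨((LinearIsometry.ofGramEq h).withLpProdMap 2 (R.comp Kᗮ.subtypeₗᵢ)).comp
    K.orthogonalDecomposition.toLinearIsometry, fun i => ?_⟩
  have hvi : Fintype.linearCombination 𝕜 v (Pi.single i 1) = v i := by
    simp [Fintype.linearCombination_apply_single]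
  have hwi : Fintype.linearCombination 𝕜 w (Pi.single i 1) = w i := by
    simp [Fintype.linearCombination_apply_single]
  have hK : v i ∈ K := hvi ▸ LinearMap.mem_range_self _ _
  have hP : K.orthogonalProjectionOnto (v i) = ⟨v i, hK⟩ :=
    K.orthogonalProjectionOnto_mem_subspace_eq_self ⟨v i, hK⟩
  simpa [hP, Submodule.orthogonalProjectionOnto_orthogonal_apply_eq_zero hK, hvi, hwi]
    using LinearIsometry.ofGramEq_apply h (Pi.single i 1)

end GramIsometry

namespace WithLp

variable {𝕜 E F : Type*} [RCLike 𝕜] [NormedAddCommGroup E] [InnerProductSpace 𝕜 E]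
  [NormedAddCommGroup F] [InnerProductSpace 𝕜 F]

variable (𝕜 E F) in
noncomputable def inlₗᵢ : E →ₗᵢ[𝕜] WithLp 2 (E × F) :=
  ((WithLp.linearEquiv 2 𝕜 (E × F)).symm.toLinearMap ∘ₗ LinearMap.inl 𝕜 E F).isometryOfInner
    fun x y => by simp

@[simp]
theorem inlₗᵢ_apply (x : E) : inlₗᵢ 𝕜 E F x = toLp 2 (x, 0) := rfl

end WithLp

section Realization

variable {𝕜 ι H K W : Type*} [RCLike 𝕜]
  [NormedAddCommGroup H] [InnerProductSpace 𝕜 H] [NormedAddCommGroup K] [InnerProductSpace 𝕜 K]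
  [NormedAddCommGroup W] [InnerProductSpace 𝕜 W]

def IsIsometricRealization (U : H →ₗᵢ[𝕜] W) (J : K →ₗᵢ[𝕜] W) (β : ι → W) (φ : ι → H)
    (χ : ι → K) (s : ι → ℝ) : Prop :=
  (∀ i, ∀ x : K, ⟪J x, β i⟫_𝕜 = 0) ∧ ∀ i, U (φ i) = (s i : 𝕜) • J (χ i) + β i

theorem IsIsometricRealization.inner_eq {U : H →ₗᵢ[𝕜] W} {J : K →ₗᵢ[𝕜] W} {β : ι → W}
    {φ : ι → H} {χ : ι → K} {s : ι → ℝ} (hr : IsIsometricRealization U J β φ χ s) (i j : ι) :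
    ⟪φ i, φ j⟫_𝕜 = (s i * s j : 𝕜) * ⟪χ i, χ j⟫_𝕜 + ⟪β i, β j⟫_𝕜 := by
  obtain ⟨horth, hU⟩ := hr
  have horth' : ⟪β i, J (χ j)⟫_𝕜 = 0 := by rw [← inner_conj_symm, horth, map_zero]
  rw [← U.inner_map_map, hU, hU]
  simp only [inner_add_left, inner_add_right, inner_smul_left, inner_smul_right, horth, horth',
    J.inner_map_map, RCLike.conj_ofReal]
  ring

theorem exists_isIsometricRealization_of_inner_eq {B G : Type*}
    [NormedAddCommGroup B] [InnerProductSpace 𝕜 B] [NormedAddCommGroup G] [InnerProductSpace 𝕜 G]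
    [Fintype ι] {φ : ι → H} {χ : ι → K} {b : ι → B} {s : ι → ℝ} (R : H →ₗᵢ[𝕜] G)
    (h : ∀ i j, ⟪φ i, φ j⟫_𝕜 = (s i * s j : 𝕜) * ⟪χ i, χ j⟫_𝕜 + ⟪b i, b j⟫_𝕜) :
    ∃ (U : H →ₗᵢ[𝕜] WithLp 2 (WithLp 2 (K × B) × G))
      (J : K →ₗᵢ[𝕜] WithLp 2 (WithLp 2 (K × B) × G)) (β : ι → WithLp 2 (WithLp 2 (K × B) × G)),
      IsIsometricRealization U J β φ χ s := by
  set w : ι → WithLp 2 (K × B) := fun i => WithLp.toLp 2 ((s i : 𝕜) • χ i, b i)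
  have hw : gram 𝕜 w = gram 𝕜 φ := by
    ext i j
    simp only [w, gram_apply, WithLp.prod_inner_apply, inner_smul_left, inner_smul_right,
      RCLike.conj_ofReal, h, add_left_inj]
    ring
  obtain ⟨U, hU⟩ := exists_linearIsometry_apply_eq_of_gram_eq hw R
  refine ⟨U, (WithLp.inlₗᵢ 𝕜 _ G).comp (WithLp.inlₗᵢ 𝕜 K B),
    fun i => WithLp.toLp 2 (WithLp.toLp 2 (0, b i), 0), fun i x => by simp, fun i => ?_⟩
  rw [hU]
  apply WithLp.ofLp_injective
  ext
  · apply WithLp.ofLp_injective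
    ext <;> simp [w]
  · simp

end Realization

theorem probabilistic_transformation_iff_general {n : ℕ} {H H₂ : Type*}
    [NormedAddCommGroup H] [InnerProductSpace ℂ H] [FiniteDimensional ℂ H]
    [NormedAddCommGroup H₂] [InnerProductSpace ℂ H₂]
    (φ : Fin n → H) (ψ : Fin n → H₂) (η : Fin n → ℝ)
    (hψ : ∀ i, ‖ψ i‖ = 1)
    (hη : ∀ i, η i ∈ Set.Icc (0 : ℝ) 1) :
    (∃ A : Matrix (Fin n) (Fin n) ℂ, A.PosSemidef ∧ (∀ i, A i i = 1) ∧
        (Matrix.of fun i j =>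
            (inner ℂ (φ i) (φ j) : ℂ)
              - (Real.sqrt (η i * η j) : ℂ) * (inner ℂ (ψ i) (ψ j) : ℂ)
                  * A i j).PosSemidef)
      ↔
    (∃ (K : Type) (_ : NormedAddCommGroup K) (_ : InnerProductSpace ℂ K)
        (_ : FiniteDimensional ℂ K)
        (K' : Type) (_ : NormedAddCommGroup K') (_ : InnerProductSpace ℂ K')
        (_ : FiniteDimensional ℂ K')
        (χ : Fin n → K) (α : Fin n → K'),
        (∀ i, ‖χ i‖ = 1) ∧ (∀ i, ‖α i‖ = 1) ∧
        (∀ i j, (inner ℂ (χ i) (χ j) : ℂ)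
            = (inner ℂ (ψ i) (ψ j) : ℂ) * (inner ℂ (α i) (α j) : ℂ)) ∧
        ∃ (W : Type) (_ : NormedAddCommGroup W) (_ : InnerProductSpace ℂ W)
          (_ : FiniteDimensional ℂ W) (U : H →ₗᵢ[ℂ] W) (J : K →ₗᵢ[ℂ] W)
          (β : Fin n → W),
            (∀ i, ∀ x : K, (inner ℂ (J x) (β i) : ℂ) = 0) ∧
            (∀ i, U (φ i) = (Real.sqrt (η i) : ℂ) • J (χ i) + β i)) := by
  have hsqrt : ∀ i j,
      (Real.sqrt (η i * η j) : ℂ) = (Real.sqrt (η i) : ℂ) * (Real.sqrt (η j) : ℂ) :=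
    fun i j => by rw [Real.sqrt_mul (hη i).1, Complex.ofReal_mul]
  constructor
  · rintro ⟨A, hA, hAdiag, hM⟩
    obtain ⟨α, hα⟩ := hA.exists_gram_eq
    obtain ⟨χ, hχ⟩ := ((posSemidef_gram ℂ ψ).hadamard hA).exists_gram_eq
    obtain ⟨b, hb⟩ := hM.exists_gram_eq
    have hαA : ∀ i j, ⟪α i, α j⟫_ℂ = A i j := fun i j => congrFun (congrFun hα i) j
    have hαχ : ∀ i j, ⟪χ i, χ j⟫_ℂ = ⟪ψ i, ψ j⟫_ℂ * ⟪α i, α j⟫_ℂ := fun i j => by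
      simpa [← hα] using congrFun (congrFun hχ i) j
    have hgram : ∀ i j, ⟪φ i, φ j⟫_ℂ
        = (Real.sqrt (η i) * Real.sqrt (η j) : ℂ) * ⟪χ i, χ j⟫_ℂ + ⟪b i, b j⟫_ℂ := fun i j => by
      have := congrFun (congrFun hb i) j
      simp only [gram_apply, Matrix.of_apply] at this
      rw [this, hαχ, hαA, ← hsqrt]
      ring
    obtain ⟨U, J, β, hr⟩ := exists_isIsometricRealization_of_inner_eq
      (stdOrthonormalBasis ℂ H).repr.toLinearIsometry hgram
    refine ⟨_, inferInstance, inferInstance, inferInstance, _, inferInstance, inferInstance,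
      inferInstance, χ, α, fun i => norm_eq_one_of_inner_self_eq_one (𝕜 := ℂ) ?_,
      fun i => norm_eq_one_of_inner_self_eq_one (𝕜 := ℂ) ?_, hαχ, _, inferInstance, inferInstance,
      inferInstance, U, J, β, hr⟩
    · rw [hαχ, inner_self_eq_one_of_norm_eq_one (hψ i), hαA, hAdiag, one_mul]
    · rw [hαA, hAdiag]
  · rintro ⟨K, _, _, _, K', _, _, _, χ, α, -, hα, hχα, W, _, _, _, U, J, β, hr⟩
    refine ⟨gram ℂ α, posSemidef_gram ℂ α, fun i => inner_self_eq_one_of_norm_eq_one (hα i), ?_⟩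
    have hβ : gram ℂ β = Matrix.of fun i j =>
        ⟪φ i, φ j⟫_ℂ - (Real.sqrt (η i * η j) : ℂ) * ⟪ψ i, ψ j⟫_ℂ * gram ℂ α i j := by
      ext i j
      have := IsIsometricRealization.inner_eq (U := U) (J := J) hr i j
      -- the `RCLike` coercion `ℝ → ℂ` is not syntactically `Complex.ofReal`, which `ring` needs
      simp only [RCLike.ofReal_eq_complex_ofReal] at this
      rw [Matrix.of_apply, gram_apply, gram_apply, this, hχα, hsqrt]
      ring
    exact hβ ▸ posSemidef_gram ℂ β

/-- Lemma 1. For unit vectors `φ₁, …, φₙ ∈ H`, `ψ₁, …, ψₙ ∈ H₂`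
and success probabilities `η₁, …, ηₙ ∈ [0,1]`, the following are equivalent:
(i) there is a positive semidefinite matrix `A` with unit diagonal such that the
matrix with entries `⟨φᵢ, φⱼ⟩ − √(ηᵢ ηⱼ) ⟨ψᵢ, ψⱼ⟩ Aᵢⱼ` is positive semidefinite;
(ii) there are unit vectors `χᵢ` (the joint output-ancilla states) and unit ancilla
vectors `αᵢ` with `⟨χᵢ, χⱼ⟩ = ⟨ψᵢ, ψⱼ⟩ ⟨αᵢ, αⱼ⟩`, together with an isometric
realization of `φᵢ ↦ χᵢ` with success probabilities `ηᵢ`. -/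
theorem probabilistic_transformation_iff {n : ℕ} {H H₂ : Type*}
    [NormedAddCommGroup H] [InnerProductSpace ℂ H] [FiniteDimensional ℂ H]
    [NormedAddCommGroup H₂] [InnerProductSpace ℂ H₂] [FiniteDimensional ℂ H₂]
    (φ : Fin n → H) (ψ : Fin n → H₂) (η : Fin n → ℝ)
    (hφ : ∀ i, ‖φ i‖ = 1) (hψ : ∀ i, ‖ψ i‖ = 1)
    (hη : ∀ i, η i ∈ Set.Icc (0 : ℝ) 1) :
    (∃ A : Matrix (Fin n) (Fin n) ℂ, A.PosSemidef ∧ (∀ i, A i i = 1) ∧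
        (Matrix.of fun i j =>
            (inner ℂ (φ i) (φ j) : ℂ)
              - (Real.sqrt (η i * η j) : ℂ) * (inner ℂ (ψ i) (ψ j) : ℂ)
                  * A i j).PosSemidef)
      ↔
    (∃ (K : Type) (_ : NormedAddCommGroup K) (_ : InnerProductSpace ℂ K)
        (_ : FiniteDimensional ℂ K)
        (K' : Type) (_ : NormedAddCommGroup K') (_ : InnerProductSpace ℂ K')
        (_ : FiniteDimensional ℂ K')
        (χ : Fin n → K) (α : Fin n → K'),
        (∀ i, ‖χ i‖ = 1) ∧ (∀ i, ‖α i‖ = 1) ∧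
        (∀ i j, (inner ℂ (χ i) (χ j) : ℂ)
            = (inner ℂ (ψ i) (ψ j) : ℂ) * (inner ℂ (α i) (α j) : ℂ)) ∧
        ∃ (W : Type) (_ : NormedAddCommGroup W) (_ : InnerProductSpace ℂ W)
          (_ : FiniteDimensional ℂ W) (U : H →ₗᵢ[ℂ] W) (J : K →ₗᵢ[ℂ] W)
          (β : Fin n → W),
            (∀ i, ∀ x : K, (inner ℂ (J x) (β i) : ℂ) = 0) ∧
            (∀ i, U (φ i) = (Real.sqrt (η i) : ℂ) • J (χ i) + β i)) :=
  probabilistic_transformation_iff_general φ ψ η hψ hη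
end

section
/- (Deterministic transformation between pure states.) Let H and H₂ be finite-dimensional complex inner product spaces, let φ_1,…,φ_n ∈ H and ψ_1,…,ψ_n ∈ H₂ be unit vectors. The following are equivalent: (i) there exists an n×n complex positive semidefinite matrix A with A_{ii} = 1 for all i such that ⟨φ_i, φ_j⟩ = ⟨ψ_i, ψ_j⟩ · A_{ij} for all i, j; (ii) there exist finite-dimensional complex inner product spaces K, K' and W, unit vectors χ_1,…,χ_n ∈ K and unit vectors α_1,…,α_n ∈ K' satisfying ⟨χ_i, χ_j⟩ = ⟨ψ_i, ψ_j⟩ · ⟨α_i, α_j⟩ for all i, j, and linear isometries U : H → W and J : K → W with U φ_i = J χ_i for all i. -/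
open scoped ComplexOrder

/-!
A positive semidefinite matrix is a Gram matrix (write `A = Bᴴ B` and take the columns of `B`),
and a unit diagonal means unit vectors, so `A` is the Gram matrix of ancilla states `αᵢ`; then
`χᵢ := φᵢ` works with `J = id`, after moving `H` isometrically into a coordinate space (`K`
must live in `Type`). Conversely, isometries preserve Gram matrices, so
`⟨φᵢ, φⱼ⟩ = ⟨χᵢ, χⱼ⟩ = ⟨ψᵢ, ψⱼ⟩ ⟨αᵢ, αⱼ⟩` and the Gram matrix of `α` serves as `A`.
-/

namespace Matrix

variable {𝕜 ι E F : Type*} [RCLike 𝕜]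

theorem PosSemidef.exists_gram_eq_s5 [Fintype ι] {A : Matrix ι ι 𝕜} (hA : A.PosSemidef) :
    ∃ v : ι → EuclideanSpace 𝕜 ι, gram 𝕜 v = A := by
  classical
  open scoped MatrixOrder in
  obtain ⟨B, rfl⟩ := CStarAlgebra.nonneg_iff_eq_star_mul_self.mp hA.nonneg
  refine ⟨fun i ↦ WithLp.toLp 2 fun k ↦ B k i, ?_⟩
  ext i j
  simp [mul_apply, PiLp.inner_apply, mul_comm]

theorem gram_apply_self_eq_one_iff [SeminormedAddCommGroup E] [InnerProductSpace 𝕜 E]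
    {v : ι → E} {i : ι} : gram 𝕜 v i i = 1 ↔ ‖v i‖ = 1 := by
  rw [gram_apply, inner_self_eq_norm_sq_to_K, ← RCLike.ofReal_pow, ← RCLike.ofReal_one,
    RCLike.ofReal_inj, pow_eq_one_iff_of_nonneg (norm_nonneg _) two_ne_zero]

theorem gram_comp_linearIsometry [SeminormedAddCommGroup E] [InnerProductSpace 𝕜 E]
    [SeminormedAddCommGroup F] [InnerProductSpace 𝕜 F] (f : E →ₗᵢ[𝕜] F) (v : ι → E) :
    gram 𝕜 (f ∘ v) = gram 𝕜 v := by
  ext i j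
  simp

end Matrix

theorem deterministic_transformation_iff_general {n : ℕ} {H H₂ : Type*}
    [NormedAddCommGroup H] [InnerProductSpace ℂ H] [FiniteDimensional ℂ H]
    [NormedAddCommGroup H₂] [InnerProductSpace ℂ H₂]
    (φ : Fin n → H) (ψ : Fin n → H₂)
    (hφ : ∀ i, ‖φ i‖ = 1) :
    (∃ A : Matrix (Fin n) (Fin n) ℂ, A.PosSemidef ∧ (∀ i, A i i = 1) ∧
        (∀ i j, (inner ℂ (φ i) (φ j) : ℂ)
            = (inner ℂ (ψ i) (ψ j) : ℂ) * A i j))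
      ↔
    (∃ (K : Type) (_ : NormedAddCommGroup K) (_ : InnerProductSpace ℂ K)
        (_ : FiniteDimensional ℂ K)
        (K' : Type) (_ : NormedAddCommGroup K') (_ : InnerProductSpace ℂ K')
        (_ : FiniteDimensional ℂ K')
        (W : Type) (_ : NormedAddCommGroup W) (_ : InnerProductSpace ℂ W)
        (_ : FiniteDimensional ℂ W)
        (χ : Fin n → K) (α : Fin n → K'),
        (∀ i, ‖χ i‖ = 1) ∧ (∀ i, ‖α i‖ = 1) ∧
        (∀ i j, (inner ℂ (χ i) (χ j) : ℂ)
            = (inner ℂ (ψ i) (ψ j) : ℂ) * (inner ℂ (α i) (α j) : ℂ)) ∧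
        ∃ (U : H →ₗᵢ[ℂ] W) (J : K →ₗᵢ[ℂ] W),
          ∀ i, U (φ i) = J (χ i)) := by
  constructor
  · rintro ⟨A, hA, hdiag, hinner⟩
    obtain ⟨α, rfl⟩ := hA.exists_gram_eq_s5
    let e := (stdOrthonormalBasis ℂ H).repr.toLinearIsometry
    refine ⟨_, inferInstance, inferInstance, inferInstance, _, inferInstance, inferInstance,
      inferInstance, _, inferInstance, inferInstance, inferInstance, e ∘ φ, α,
      fun i ↦ by simp [e, hφ i], fun i ↦ Matrix.gram_apply_self_eq_one_iff.mp (hdiag i),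
      fun i j ↦ ?_, e, LinearIsometry.id, fun i ↦ rfl⟩
    rw [← Matrix.gram_apply, Matrix.gram_comp_linearIsometry, Matrix.gram_apply, hinner,
      Matrix.gram_apply]
  · rintro ⟨K, _, _, _, K', _, _, _, W, _, _, _, χ, α, -, hα, hχ, U, J, hUJ⟩
    have hφχ : Matrix.gram ℂ φ = Matrix.gram ℂ χ := by
      rw [← Matrix.gram_comp_linearIsometry U, ← Matrix.gram_comp_linearIsometry J]
      exact congrArg _ (funext hUJ)
    refine ⟨Matrix.gram ℂ α, Matrix.posSemidef_gram ℂ α,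
      fun i ↦ Matrix.gram_apply_self_eq_one_iff.mpr (hα i), fun i j ↦ ?_⟩
    rw [← Matrix.gram_apply, hφχ, Matrix.gram_apply, hχ, Matrix.gram_apply]

/-- deterministic transformation between pure states.
For unit vectors `φ₁, …, φₙ ∈ H` and `ψ₁, …, ψₙ ∈ H₂`, the following are
equivalent: (i) there is a positive semidefinite matrix `A` with unit diagonal
such that `⟨φᵢ, φⱼ⟩ = ⟨ψᵢ, ψⱼ⟩ Aᵢⱼ` for all `i, j`;
(ii) there are unit vectors `χᵢ` (the joint output-ancilla states) and unit
ancilla vectors `αᵢ` with `⟨χᵢ, χⱼ⟩ = ⟨ψᵢ, ψⱼ⟩ ⟨αᵢ, αⱼ⟩`, together with linear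
isometries `U : H → W` and `J : K → W` with `U φᵢ = J χᵢ` for all `i`. -/
theorem deterministic_transformation_iff {n : ℕ} {H H₂ : Type*}
    [NormedAddCommGroup H] [InnerProductSpace ℂ H] [FiniteDimensional ℂ H]
    [NormedAddCommGroup H₂] [InnerProductSpace ℂ H₂] [FiniteDimensional ℂ H₂]
    (φ : Fin n → H) (ψ : Fin n → H₂)
    (hφ : ∀ i, ‖φ i‖ = 1) (hψ : ∀ i, ‖ψ i‖ = 1) :
    (∃ A : Matrix (Fin n) (Fin n) ℂ, A.PosSemidef ∧ (∀ i, A i i = 1) ∧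
        (∀ i j, (inner ℂ (φ i) (φ j) : ℂ)
            = (inner ℂ (ψ i) (ψ j) : ℂ) * A i j))
      ↔
    (∃ (K : Type) (_ : NormedAddCommGroup K) (_ : InnerProductSpace ℂ K)
        (_ : FiniteDimensional ℂ K)
        (K' : Type) (_ : NormedAddCommGroup K') (_ : InnerProductSpace ℂ K')
        (_ : FiniteDimensional ℂ K')
        (W : Type) (_ : NormedAddCommGroup W) (_ : InnerProductSpace ℂ W)
        (_ : FiniteDimensional ℂ W)
        (χ : Fin n → K) (α : Fin n → K'),
        (∀ i, ‖χ i‖ = 1) ∧ (∀ i, ‖α i‖ = 1) ∧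
        (∀ i j, (inner ℂ (χ i) (χ j) : ℂ)
            = (inner ℂ (ψ i) (ψ j) : ℂ) * (inner ℂ (α i) (α j) : ℂ)) ∧
        ∃ (U : H →ₗᵢ[ℂ] W) (J : K →ₗᵢ[ℂ] W),
          ∀ i, U (φ i) = J (χ i)) :=
  deterministic_transformation_iff_general φ ψ hφ
end
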